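/- Let G be a closed subgroup of the orthogonal group O(d). For x ∈ ℝ^d, the following are equivalent: (a) x ∈ P(G); (b) for every z ∈ ℝ^d, z ∈ U_x implies x ∈ U_z. -/

import Mathlib

open scoped RealInnerProductSpace

noncomputable section

/-- `d × d` real matrices. -/
abbrev Mat (d : ℕ) := Matrix (Fin d) (Fin d) ℝ

/-- Euclidean space `ℝ^d`. -/
abbrev Euc (d : ℕ) := EuclideanSpace ℝ (Fin d)

/-- The orthogonal group `O(d)`. -/
abbrev OG (d : ℕ) := Matrix.orthogonalGroup (Fin d) ℝ

variable {d : ℕ}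

/-- The action of an orthogonal matrix on Euclidean space. -/
def act (g : OG d) (x : Euc d) : Euc d := Matrix.toEuclideanLin (g : Mat d) x

lemma act_one (x : Euc d) : act (1 : OG d) x = x := by
  simp [act, Matrix.toEuclideanLin_apply, Matrix.one_mulVec]

lemma act_mul (a b : OG d) (x : Euc d) : act (a * b) x = act a (act b x) := by
  simp [act, Matrix.toEuclideanLin_apply, Matrix.mulVec_mulVec]

lemma act_inv_of_fix {g : OG d} {x : Euc d} (h : act g x = x) : act g⁻¹ x = x := by
  conv_lhs => rw [← h, ← act_mul, inv_mul_cancel, act_one]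

/-- The set of matrices underlying a subgroup `G ≤ O(d)`. -/
def matSet (G : Subgroup (OG d)) : Set (Mat d) := {m | ∃ g ∈ G, (g : Mat d) = m}

/-- The orbit `[x] = G ⬝ x`. -/
def orb (G : Subgroup (OG d)) (x : Euc d) : Set (Euc d) := {y | ∃ g ∈ G, act g x = y}

/-- The quotient metric `d([x],[y]) = inf_{g ∈ G} ‖g x − y‖`. -/
def qdist (G : Subgroup (OG d)) (x y : Euc d) : ℝ := ⨅ g : G, ‖act (g : OG d) x - y‖

/-- The max filtering map `⟪[x],[z]⟫ = sup_{g ∈ G} ⟨g x, z⟩`. -/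
def maxFilt (G : Subgroup (OG d)) (x z : Euc d) : ℝ := ⨆ g : G, ⟪act (g : OG d) x, z⟫

/-- The stabilizer `G_x = {g ∈ G : g x = x}` as a subgroup. -/
def stab (G : Subgroup (OG d)) (x : Euc d) : Subgroup (OG d) where
  carrier := {g | g ∈ G ∧ act g x = x}
  one_mem' := ⟨G.one_mem, act_one x⟩
  mul_mem' := fun ha hb => ⟨G.mul_mem ha.1 hb.1, by rw [act_mul, hb.2, ha.2]⟩
  inv_mem' := fun ha => ⟨G.inv_mem ha.1, act_inv_of_fix ha.2⟩

/-- The Lie algebra `𝔤` of `G`: matrices whose one-parameter exponential subgroup lies in `G`. -/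
def lieAlg (G : Subgroup (OG d)) : Set (Mat d) :=
  {A | ∀ t : ℝ, ∃ g ∈ G, (g : Mat d) = NormedSpace.exp (t • A)}

/-- The tangent space `T_x = 𝔤 ⬝ x` to the orbit at `x`. -/
def Tsp (G : Subgroup (OG d)) (x : Euc d) : Submodule ℝ (Euc d) :=
  Submodule.span ℝ {v | ∃ A ∈ lieAlg G, Matrix.toEuclideanLin A x = v}

/-- The normal space `N_x = T_x^⊥`. -/
def Nsp (G : Subgroup (OG d)) (x : Euc d) : Submodule ℝ (Euc d) := (Tsp G x)ᗮ

/-- The maximal orbit dimension `max_y dim T_y`. -/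
def orbDimMax (G : Subgroup (OG d)) : ℕ := ⨆ y : Euc d, Module.finrank ℝ (Tsp G y)

/-- The set of regular points `R(G)`. -/
def RG (G : Subgroup (OG d)) : Set (Euc d) :=
  {x | Module.finrank ℝ (Tsp G x) = orbDimMax G}

/-- The set of principal points `P(G)`. -/
def PG (G : Subgroup (OG d)) : Set (Euc d) :=
  {x | ∀ z : Euc d, stab G z ≤ stab G x → stab G z = stab G x}

/-- The regular Voronoi complexity `χ(G)`. -/
def chi (G : Subgroup (OG d)) : ℕ :=
  sSup {k : ℕ | ∃ x ∈ RG G, ∃ p ∈ RG G,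
    stab G p ≤ stab G x ∧ k = (stab G p).relIndex (stab G x)}

/-- The set of maximizers `{p ∈ [x] : ⟨p,z⟩ = ⟪[x],[z]⟫}`. -/
def argmaxSet (G : Subgroup (OG d)) (x z : Euc d) : Set (Euc d) :=
  {p | p ∈ orb G x ∧ ⟪p, z⟫ = maxFilt G x z}

/-- The unique Voronoi cell `U_x`. -/
def Ucell (G : Subgroup (OG d)) (x : Euc d) : Set (Euc d) :=
  {z | argmaxSet G x z = {x}}

/-- The open Voronoi cell `V_x`, the relative (intrinsic) interior of `U_x`. -/
def Vcell (G : Subgroup (OG d)) (x : Euc d) : Set (Euc d) :=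
  intrinsicInterior ℝ (Ucell G x)

/-- The open Voronoi diagram `Q_x`. -/
def Qdiag (G : Subgroup (OG d)) (x : Euc d) : Set (Euc d) :=
  ⋃ p ∈ orb G x, Vcell G p

/-- Membership `x ∈ V_z^{loc}` in the local open Voronoi cell. -/
def VlocMem (G : Subgroup (OG d)) (z x : Euc d) : Prop :=
  ∃ U V : Set (Euc d), IsOpen U ∧ z ∈ U ∧ IsOpen V ∧ x ∈ V ∧
    ∀ q ∈ V, ∃ p₀ : Euc d,
      {p | p ∈ orb G z ∩ U ∧
        ⟪p, q⟫ = ⨆ p' : (orb G z ∩ U : Set (Euc d)), ⟪(p' : Euc d), q⟫} = {p₀}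

/-- The max filter bank `Φ(x) = (⟪[x],[z_i]⟫)_{i=1}^n`. -/
def filterBank (G : Subgroup (OG d)) {n : ℕ} (z : Fin n → Euc d) (x : Euc d) :
    EuclideanSpace ℝ (Fin n) :=
  (WithLp.equiv 2 (Fin n → ℝ)).symm fun i => maxFilt G x (z i)

/-- `Φ` is locally lower Lipschitz at `x` (with respect to the quotient metric). -/
def LocLowerLip (G : Subgroup (OG d)) {n : ℕ}
    (Φ : Euc d → EuclideanSpace ℝ (Fin n)) (x : Euc d) : Prop :=
  ∃ α > (0 : ℝ), ∃ ε > (0 : ℝ), ∀ x' y' : Euc d,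
    qdist G x' x < ε → qdist G y' x < ε → α * qdist G x' y' ≤ ‖Φ x' - Φ y'‖

/-- `Φ` is bilipschitz with respect to the quotient metric. -/
def BiLip (G : Subgroup (OG d)) {n : ℕ}
    (Φ : Euc d → EuclideanSpace ℝ (Fin n)) : Prop :=
  ∃ α > (0 : ℝ), ∃ β > (0 : ℝ), ∀ x y : Euc d,
    α * qdist G x y ≤ ‖Φ x - Φ y‖ ∧ ‖Φ x - Φ y‖ ≤ β * qdist G x y


/-! ### Auxiliary lemmas -/

lemma act_add (g : OG d) (u v : Euc d) : act g (u + v) = act g u + act g v :=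
  map_add (Matrix.toEuclideanLin (g : Mat d)) u v

lemma coe_inv_mat (g : OG d) : ((g⁻¹ : OG d) : Mat d) = star ((g : OG d) : Mat d) := rfl

lemma inner_act_left (g : OG d) (u v : Euc d) : ⟪act g u, v⟫ = ⟪u, act g⁻¹ v⟫ := by
  show ⟪Matrix.toEuclideanLin (g : Mat d) u, v⟫
      = ⟪u, Matrix.toEuclideanLin ((g⁻¹ : OG d) : Mat d) v⟫
  rw [coe_inv_mat, Matrix.star_eq_conjTranspose,
    Matrix.toEuclideanLin_conjTranspose_eq_adjoint, LinearMap.adjoint_inner_right]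

lemma act_act_inv (g : OG d) (v : Euc d) : act g (act g⁻¹ v) = v := by
  rw [← act_mul, mul_inv_cancel, act_one]

lemma act_inv_act (g : OG d) (v : Euc d) : act g⁻¹ (act g v) = v := by
  rw [← act_mul, inv_mul_cancel, act_one]

lemma norm_act (g : OG d) (v : Euc d) : ‖act g v‖ = ‖v‖ := by
  have h : ⟪act g v, act g v⟫ = ⟪v, v⟫ := by
    rw [inner_act_left, act_inv_act]
  rw [real_inner_self_eq_norm_mul_norm, real_inner_self_eq_norm_mul_norm] at h
  nlinarith [norm_nonneg (act g v), norm_nonneg v]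

lemma mem_stab {G : Subgroup (OG d)} {g : OG d} {v : Euc d} :
    g ∈ stab G v ↔ g ∈ G ∧ act g v = v := Iff.rfl

lemma bdd_maxFilt (G : Subgroup (OG d)) (x z : Euc d) :
    BddAbove (Set.range fun g : G => ⟪act (g : OG d) x, z⟫) := by
  refine ⟨‖x‖ * ‖z‖, ?_⟩
  rintro r ⟨g, rfl⟩
  calc ⟪act (g : OG d) x, z⟫ ≤ ‖act (g : OG d) x‖ * ‖z‖ := real_inner_le_norm _ _
    _ = ‖x‖ * ‖z‖ := by rw [norm_act]

lemma maxFilt_eq_of (G : Subgroup (OG d)) (x z : Euc d) {c : ℝ}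
    (hub : ∀ g : G, ⟪act (g : OG d) x, z⟫ ≤ c) (g₀ : G)
    (h₀ : ⟪act (g₀ : OG d) x, z⟫ = c) : maxFilt G x z = c := by
  haveI : Nonempty G := ⟨1⟩
  refine le_antisymm (ciSup_le hub) ?_
  rw [← h₀]
  exact le_ciSup (bdd_maxFilt G x z) g₀

lemma maxFilt_attained {G : Subgroup (OG d)} {x z : Euc d} (h : z ∈ Ucell G x) :
    ⟪x, z⟫ = maxFilt G x z := by
  have hz : argmaxSet G x z = {x} := h
  have hx : x ∈ argmaxSet G x z := by rw [hz]; rfl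
  exact hx.2

lemma stab_le_of_mem_Ucell {G : Subgroup (OG d)} {x z : Euc d} (h : z ∈ Ucell G x) :
    stab G z ≤ stab G x := by
  intro g hg
  obtain ⟨hgG, hgz⟩ := (mem_stab.mp hg)
  have hz : argmaxSet G x z = {x} := h
  have hmem : act g⁻¹ x ∈ argmaxSet G x z := by
    refine ⟨⟨g⁻¹, inv_mem hgG, rfl⟩, ?_⟩
    rw [inner_act_left, inv_inv, hgz]
    exact maxFilt_attained h
  rw [hz] at hmem
  have hfix : act g⁻¹ x = x := hmem
  have h2 := congrArg (act g) hfix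
  rw [act_act_inv] at h2
  exact mem_stab.mpr ⟨hgG, h2.symm⟩

lemma mem_Ucell_of_dual (G : Subgroup (OG d)) (x n : Euc d)
    (hn : ∀ g : OG d, g ∈ G → ⟪act g x, n⟫ ≤ ⟪x, n⟫) : x + n ∈ Ucell G x := by
  have key : ∀ g : OG d, ⟪act g x, x⟫ ≤ ⟪x, x⟫ := by
    intro g
    calc ⟪act g x, x⟫ ≤ ‖act g x‖ * ‖x‖ := real_inner_le_norm _ _
      _ = ⟪x, x⟫ := by rw [norm_act, real_inner_self_eq_norm_mul_norm]
  have hub : ∀ g : G, ⟪act (g : OG d) x, x + n⟫ ≤ ⟪x, x + n⟫ := by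
    intro g
    rw [inner_add_right, inner_add_right]
    exact add_le_add (key g) (hn g g.2)
  have hmf : maxFilt G x (x + n) = ⟪x, x + n⟫ := by
    refine maxFilt_eq_of G x (x + n) hub 1 ?_
    norm_num [act_one]
  show argmaxSet G x (x + n) = {x}
  refine Set.eq_singleton_iff_unique_mem.mpr ⟨⟨⟨1, G.one_mem, act_one x⟩, by rw [hmf]⟩, ?_⟩
  rintro p ⟨⟨g, hg, rfl⟩, hp⟩
  rw [hmf, inner_add_right, inner_add_right] at hp
  have h1 := key g
  have h2 := hn g hg
  have h3 : ⟪act g x, x⟫ = ⟪x, x⟫ := by linarith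
  have h4 : ‖act g x - x‖ ^ 2 = 0 := by
    rw [norm_sub_sq_real, norm_act, h3, real_inner_self_eq_norm_sq]
    ring
  have h5 : act g x - x = 0 := by
    have h6 : ‖act g x - x‖ = 0 := by
      have := (pow_eq_zero_iff (two_ne_zero)).mp h4
      exact this
    exact norm_eq_zero.mp h6
  exact sub_eq_zero.mp h5

/-- Continuity of `M ↦ M x`. -/
lemma cont_evalx (x : Euc d) : Continuous fun M : Mat d => Matrix.toEuclideanLin M x := by
  let L : Mat d →ₗ[ℝ] Euc d :=
    { toFun := fun M => Matrix.toEuclideanLin M x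
      map_add' := fun M N => by
        show Matrix.toEuclideanLin (M + N) x
            = Matrix.toEuclideanLin M x + Matrix.toEuclideanLin N x
        rw [map_add]; rfl
      map_smul' := fun c M => by
        show Matrix.toEuclideanLin (c • M) x = c • Matrix.toEuclideanLin M x
        rw [map_smul]; rfl }
  exact L.continuous_of_finiteDimensional

lemma matSet_compact {G : Subgroup (OG d)} (h : IsClosed (matSet G)) :
    IsCompact (matSet G) := by
  have hpi : IsCompact
      (Set.univ.pi fun _ : Fin d =>
        Set.univ.pi fun _ : Fin d => Set.Icc (-1 : ℝ) 1 : Set (Mat d)) :=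
    isCompact_univ_pi fun _ => isCompact_univ_pi fun _ => isCompact_Icc
  refine hpi.of_isClosed_subset h ?_
  rintro M ⟨g, _, rfl⟩
  refine Set.mem_univ_pi.mpr ?_
  intro i
  refine Set.mem_univ_pi.mpr ?_
  intro j
  have hst := Matrix.UnitaryGroup.star_mul_self g
  have hdiag := congrFun (congrFun hst j) j
  rw [Matrix.mul_apply] at hdiag
  have hcol : ∑ k, ((g : Mat d) k j) ^ 2 = 1 := by
    have h1 : ∀ k, (star ((g : OG d) : Mat d)) j k * (g : Mat d) k j = ((g : Mat d) k j) ^ 2 := by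
      intro k
      rw [Matrix.star_apply, star_trivial]
      ring
    rw [← Finset.sum_congr rfl fun k _ => h1 k] at *
    simpa [Matrix.one_apply] using hdiag
  have hsq : ((g : Mat d) i j) ^ 2 ≤ 1 := by
    rw [← hcol]
    exact Finset.single_le_sum (f := fun k => ((g : Mat d) k j) ^ 2)
      (fun k _ => sq_nonneg _) (Finset.mem_univ i)
  constructor <;> nlinarith [hsq]

/-- If conjugation by `a` maps the stabilizer of `x` into itself, so does conjugation
by `a⁻¹` (uses compactness of `G`). -/
lemma conj_mem_stab_of_conj {G : Subgroup (OG d)} (hGclosed : IsClosed (matSet G))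
    (x : Euc d) (a : OG d) (ha : a ∈ G)
    (hconj : ∀ k, k ∈ stab G x → a * k * a⁻¹ ∈ stab G x) :
    ∀ k, k ∈ stab G x → a⁻¹ * k * a ∈ stab G x := by
  intro k hk
  have hpow : ∀ m : ℕ, a ^ m * k * (a ^ m)⁻¹ ∈ stab G x := by
    intro m
    induction m with
    | zero => simpa using hk
    | succ m ih =>
        have h2 := hconj _ ih
        have hid : a ^ (m + 1) * k * (a ^ (m + 1))⁻¹
            = a * (a ^ m * k * (a ^ m)⁻¹) * a⁻¹ := by
          rw [pow_succ']
          group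
        rw [hid]
        exact h2
  haveI : FirstCountableTopology (Mat d) :=
    inferInstanceAs (FirstCountableTopology (Fin d → Fin d → ℝ))
  have hcpt := matSet_compact hGclosed
  have hmem : ∀ m : ℕ, ((a ^ m : OG d) : Mat d) ∈ matSet G := fun m => ⟨a ^ m, pow_mem ha m, rfl⟩
  obtain ⟨L, hL, φ, hφ, htendφ⟩ := hcpt.tendsto_subseq hmem
  obtain ⟨gL, _, hgLval⟩ := hL
  have hLunit : star L * L = 1 := by
    rw [← hgLval]
    exact Matrix.UnitaryGroup.star_mul_self gL
  set m : ℕ → ℕ := fun j => φ (j + 1) - φ j - 1 with hm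
  have hmkey : ∀ j, φ (j + 1) = φ j + (m j + 1) := by
    intro j
    have := hφ (show j < j + 1 by omega)
    simp only [hm]
    omega
  have hpowid : ∀ j, (a ^ (m j) : OG d) = (a ^ (φ j))⁻¹ * a ^ (φ (j + 1)) * a⁻¹ := by
    intro j
    have h1 : a ^ (φ (j + 1)) = a ^ (φ j) * a ^ (m j) * a := by
      rw [hmkey j, pow_add, pow_succ, mul_assoc]
    rw [h1]
    group
  have htendm : Filter.Tendsto (fun j => ((a ^ (m j) : OG d) : Mat d)) Filter.atTop
      (nhds ((a⁻¹ : OG d) : Mat d)) := by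
    have h2 : Filter.Tendsto (fun j => ((a ^ (φ (j + 1)) : OG d) : Mat d)) Filter.atTop
        (nhds L) := htendφ.comp (Filter.tendsto_add_atTop_nat 1)
    have h3 := (htendφ.star.mul h2).mul
      (tendsto_const_nhds (x := star ((a : OG d) : Mat d)) (f := Filter.atTop (α := ℕ)))
    rw [hLunit] at h3
    have h4 : ∀ j, ((a ^ (m j) : OG d) : Mat d)
        = star (((a ^ (φ j) : OG d)) : Mat d) * ((a ^ (φ (j + 1)) : OG d) : Mat d)
          * star ((a : OG d) : Mat d) := by
      intro j
      rw [hpowid j]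
      rfl
    have h5 : ((a⁻¹ : OG d) : Mat d) = 1 * star ((a : OG d) : Mat d) := by
      rw [one_mul]
      rfl
    rw [h5]
    exact Filter.Tendsto.congr (fun j => (h4 j).symm) h3
  have htendb : Filter.Tendsto
      (fun j => ((a ^ (m j) * k * (a ^ (m j))⁻¹ : OG d) : Mat d)) Filter.atTop
      (nhds ((a⁻¹ * k * a : OG d) : Mat d)) := by
    have h4 := (htendm.mul
      (tendsto_const_nhds (x := ((k : OG d) : Mat d)) (f := Filter.atTop (α := ℕ)))).mul
      htendm.star
    have h5 : ((a⁻¹ : OG d) : Mat d) * ((k : OG d) : Mat d) * star ((a⁻¹ : OG d) : Mat d)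
        = ((a⁻¹ * k * a : OG d) : Mat d) := by
      have h6 : star ((a⁻¹ : OG d) : Mat d) = ((a : OG d) : Mat d) := by
        rw [coe_inv_mat, star_star]
      rw [h6]
      rfl
    rw [h5] at h4
    exact Filter.Tendsto.congr (fun j => rfl) h4
  have hmemG : (a⁻¹ * k * a : OG d) ∈ G := by
    have hmemS : ((a⁻¹ * k * a : OG d) : Mat d) ∈ matSet G := by
      refine hGclosed.mem_of_tendsto htendb (Filter.Eventually.of_forall fun j => ?_)
      exact ⟨a ^ (m j) * k * (a ^ (m j))⁻¹,
        mul_mem (mul_mem (pow_mem ha _) (mem_stab.mp hk).1) (inv_mem (pow_mem ha _)), rfl⟩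
    obtain ⟨g', hg', hval⟩ := hmemS
    have : g' = a⁻¹ * k * a := Subtype.coe_injective hval
    rwa [this] at hg'
  have hfix : act (a⁻¹ * k * a) x = x := by
    have hc := ((cont_evalx x).tendsto (((a⁻¹ * k * a : OG d) : Mat d))).comp htendb
    have h7 : (fun j => Matrix.toEuclideanLin ((a ^ (m j) * k * (a ^ (m j))⁻¹ : OG d) : Mat d) x)
        = fun _ => x := funext fun j => (mem_stab.mp (hpow (m j))).2
    rw [show ((fun M : Mat d => Matrix.toEuclideanLin M x) ∘
      (fun j => ((a ^ (m j) * k * (a ^ (m j))⁻¹ : OG d) : Mat d))) =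
      (fun j => Matrix.toEuclideanLin ((a ^ (m j) * k * (a ^ (m j))⁻¹ : OG d) : Mat d) x)
      from rfl, h7] at hc
    exact (tendsto_nhds_unique tendsto_const_nhds hc).symm
  exact mem_stab.mpr ⟨hmemG, hfix⟩

/-- `x ∈ P(G)` iff for every `z`, `z ∈ U_x` implies `x ∈ U_z`. -/
theorem principal_iff_Ucell_interchange
    (d : ℕ) (G : Subgroup (OG d)) (hGclosed : IsClosed (matSet G)) (x : Euc d) :
    x ∈ PG G ↔ ∀ z : Euc d, z ∈ Ucell G x → x ∈ Ucell G z := by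
  haveI : Nonempty G := ⟨1⟩
  constructor
  · -- (a) ⇒ (b)
    intro hP z hz
    have hP' : ∀ z', stab G z' ≤ stab G x → stab G z' = stab G x := hP
    have hle : stab G z ≤ stab G x := stab_le_of_mem_Ucell hz
    have heq : stab G z = stab G x := hP' z hle
    have hz' : argmaxSet G x z = {x} := hz
    have hx2 : ⟪x, z⟫ = maxFilt G x z := maxFilt_attained hz
    have hub : ∀ g : G, ⟪act (g : OG d) z, x⟫ ≤ ⟪z, x⟫ := by
      intro g
      have h1 : ⟪act (g : OG d) z, x⟫ = ⟪act ((g : OG d))⁻¹ x, z⟫ := by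
        rw [inner_act_left]
        exact real_inner_comm _ _
      have h2 : ⟪act (((g⁻¹ : G) : OG d)) x, z⟫ ≤ maxFilt G x z :=
        le_ciSup (bdd_maxFilt G x z) (g⁻¹ : G)
      calc ⟪act (g : OG d) z, x⟫ = ⟪act ((g : OG d))⁻¹ x, z⟫ := h1
        _ ≤ maxFilt G x z := by simpa using h2
        _ = ⟪x, z⟫ := hx2.symm
        _ = ⟪z, x⟫ := real_inner_comm _ _
    have hmf : maxFilt G z x = ⟪z, x⟫ := by
      refine maxFilt_eq_of G z x hub 1 ?_
      norm_num [act_one]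
    show argmaxSet G z x = {z}
    refine Set.eq_singleton_iff_unique_mem.mpr ⟨⟨⟨1, G.one_mem, act_one z⟩, by rw [hmf]⟩, ?_⟩
    rintro p ⟨⟨g, hg, rfl⟩, hp⟩
    rw [hmf] at hp
    have h1 : ⟪act g⁻¹ x, z⟫ = maxFilt G x z := by
      rw [← hx2, inner_act_left, inv_inv, real_inner_comm, hp, real_inner_comm]
    have hmem : act g⁻¹ x ∈ argmaxSet G x z := ⟨⟨g⁻¹, inv_mem hg, rfl⟩, h1⟩
    rw [hz'] at hmem
    have hfix : act g⁻¹ x = x := hmem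
    have hgx : g⁻¹ ∈ stab G x := mem_stab.mpr ⟨inv_mem hg, hfix⟩
    rw [← heq] at hgx
    have hzfix : act g⁻¹ z = z := (mem_stab.mp hgx).2
    have h2 := congrArg (act g) hzfix
    rw [act_act_inv] at h2
    exact h2.symm
  · -- (b) ⇒ (a)
    intro Hb
    intro z hzle
    refine le_antisymm hzle ?_
    -- a maximizer over the compact group
    have hcpt := matSet_compact hGclosed
    have hne : (matSet G).Nonempty := ⟨((1 : OG d) : Mat d), 1, G.one_mem, rfl⟩
    have hcontf : Continuous fun M : Mat d => ⟪Matrix.toEuclideanLin M x, z⟫ :=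
      (cont_evalx x).inner continuous_const
    obtain ⟨M₀, hM₀, hmax⟩ := hcpt.exists_isMaxOn hne hcontf.continuousOn
    obtain ⟨a, haG, haM⟩ := hM₀
    have hmax' : ∀ g : OG d, g ∈ G → ⟪act g x, z⟫ ≤ ⟪act a x, z⟫ := by
      intro g hg
      have h1 := hmax (show ((g : OG d) : Mat d) ∈ matSet G from ⟨g, hg, rfl⟩)
      simp only [Set.mem_setOf_eq] at h1
      rw [← haM] at h1
      exact h1
    set n := act a⁻¹ z with hn
    have hdual : ∀ g : OG d, g ∈ G → ⟪act g x, n⟫ ≤ ⟪x, n⟫ := by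
      intro g hg
      have e1 : ⟪act g x, n⟫ = ⟪act (a * g) x, z⟫ := by
        rw [hn, real_inner_comm, inner_act_left, inv_inv, act_mul]
        exact real_inner_comm _ _
      have e2 : ⟪x, n⟫ = ⟪act a x, z⟫ := by
        rw [hn, real_inner_comm, inner_act_left, inv_inv]
        exact real_inner_comm _ _
      rw [e1, e2]
      exact hmax' (a * g) (mul_mem haG hg)
    have hU : x + n ∈ Ucell G x := mem_Ucell_of_dual G x n hdual
    have hUx : x ∈ Ucell G (x + n) := Hb _ hU
    have hstab_le : stab G x ≤ stab G (x + n) := stab_le_of_mem_Ucell hUx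
    have hfixn : ∀ k, k ∈ stab G x → act k n = n := by
      intro k hk
      have h1 : act k (x + n) = x + n := (mem_stab.mp (hstab_le hk)).2
      rw [act_add, (mem_stab.mp hk).2] at h1
      exact add_left_cancel h1
    have hconjz : ∀ k, k ∈ stab G x → a * k * a⁻¹ ∈ stab G z := by
      intro k hk
      refine mem_stab.mpr ⟨mul_mem (mul_mem haG (mem_stab.mp hk).1) (inv_mem haG), ?_⟩
      have h1 : act k (act a⁻¹ z) = act a⁻¹ z := hfixn k hk
      calc act (a * k * a⁻¹) z = act a (act k (act a⁻¹ z)) := by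
            rw [act_mul, act_mul]
        _ = act a (act a⁻¹ z) := by rw [h1]
        _ = z := act_act_inv a z
    have hconjx : ∀ k, k ∈ stab G x → a * k * a⁻¹ ∈ stab G x :=
      fun k hk => hzle (hconjz k hk)
    have hconj' := conj_mem_stab_of_conj hGclosed x a haG hconjx
    intro k hk
    have h2 := hconjz _ (hconj' k hk)
    have h3 : a * (a⁻¹ * k * a) * a⁻¹ = k := by group
    rwa [h3] at h2


end
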